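/- arXiv:2203.15910 — 5 statements merged into one kernel-verified Lean document; each statement's English description precedes it below -/
import Mathlib

section
/- Let ℓ ≥ 1 and let Q be a quadratic form on an ℓ-dimensional 𝔽₂-vector space with Q not identically zero. Then Q is isometric to one of the following: H₊^{⊕m₁} ⊕ 0^{⊕m₂} with m₁ ≥ 1 and 2m₁ + m₂ = ℓ; H₋ ⊕ H₊^{⊕(m₁−1)} ⊕ 0^{⊕m₂} with m₁ ≥ 1 and 2m₁ + m₂ = ℓ; or H₊^{⊕m₁} ⊕ Q₁ ⊕ 0^{⊕(m₂−1)} with m₁ ≥ 0, m₂ ≥ 1 and 2m₁ + m₂ = ℓ. -/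
/-!
If the polar form `B` of `Q` is nonzero, choose `u, v` with `B(u, v) = 1`; replacing the pair by
`(u + v, u)` or `(v, u + v)` if necessary, `Q u = Q v = ε`. Then `V = ⟨u, v⟩ ⊕ ⟨u, v⟩^⊥` and on the
plane `Q(xu + yv) = xy + ε(x + y)`, which is `H₊` or `H₋`. Iterating leaves a form with `B = 0`,
i.e. a linear form, which is `0` or `Q₁ ⊕ 0` up to isometry. Finally `H₋ ⊕ H₋ ≅ H₊ ⊕ H₊`, so at most
one `H₋` survives, and none next to a `Q₁`, into which the twists can be sheared off.
-/

/-- The polar form `B_Q(u,v) = Q(u+v) − Q(u) − Q(v)` of a map `Q : V → 𝔽₂`. -/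
def polarF {V : Type*} [Add V] (Q : V → ZMod 2) (u v : V) : ZMod 2 :=
  Q (u + v) - Q u - Q v

/-- `Q : V → 𝔽₂` is a quadratic form: `Q (a • v) = a² Q v` and the polar form is bilinear
(by symmetry of `polarF`, additivity and homogeneity in the first variable suffice, but we
record both variables). -/
def IsQuadraticForm {V : Type*} [AddCommGroup V] [Module (ZMod 2) V]
    (Q : V → ZMod 2) : Prop :=
  (∀ (a : ZMod 2) (v : V), Q (a • v) = a * a * Q v) ∧
  (∀ u v w : V, polarF Q (u + v) w = polarF Q u w + polarF Q v w) ∧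
  (∀ (a : ZMod 2) (u v : V), polarF Q (a • u) v = a * polarF Q u v) ∧
  (∀ u v w : V, polarF Q u (v + w) = polarF Q u v + polarF Q u w) ∧
  (∀ (a : ZMod 2) (u v : V), polarF Q u (a • v) = a * polarF Q u v)

/-- Two 𝔽₂-valued forms are isometric if one is obtained from the other by composition with a
linear isomorphism. -/
def IsometricForms {V W : Type*} [AddCommGroup V] [Module (ZMod 2) V]
    [AddCommGroup W] [Module (ZMod 2) W] (Q : V → ZMod 2) (Q' : W → ZMod 2) : Prop :=
  ∃ f : V ≃ₗ[ZMod 2] W, ∀ v, Q v = Q' (f v)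

/-- `H₊(x,y) = xy`. -/
def Hplus : ZMod 2 × ZMod 2 → ZMod 2 := fun p => p.1 * p.2

/-- `H₋(x,y) = x² + y² + xy`. -/
def Hminus : ZMod 2 × ZMod 2 → ZMod 2 := fun p => p.1 ^ 2 + p.2 ^ 2 + p.1 * p.2

/-- `Q₁(x) = x²`. -/
def Qone : ZMod 2 → ZMod 2 := fun x => x ^ 2

open Module LinearMap

local notation "𝔽₂" => ZMod 2

lemma zmod2_eq_zero_or_eq_one (a : 𝔽₂) : a = 0 ∨ a = 1 := by
  revert a; decide

lemma apply_add_eq_add_polarF {V : Type*} [Add V] (Q : V → 𝔽₂) (u v : V) :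
    Q (u + v) = Q u + Q v + polarF Q u v := by
  unfold polarF; ring

lemma polarF_comm {V : Type*} [AddCommMagma V] (Q : V → 𝔽₂) (u v : V) :
    polarF Q u v = polarF Q v u := by
  unfold polarF; rw [add_comm u v]; ring

namespace IsQuadraticForm

variable {V W : Type*} [AddCommGroup V] [Module 𝔽₂ V] [AddCommGroup W] [Module 𝔽₂ W]
  {Q : V → 𝔽₂} (hQ : IsQuadraticForm Q)
include hQ

lemma map_zero : Q 0 = 0 := by
  simpa using hQ.1 0 0

lemma map_smul (a : 𝔽₂) (v : V) : Q (a • v) = a * Q v := by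
  rw [hQ.1]
  congr 1
  revert a; decide

lemma polarF_self (v : V) : polarF Q v v = 0 := by
  have h2 : (2 : 𝔽₂) = 0 := rfl
  have : v + v = 0 := by rw [← two_smul 𝔽₂ v, h2, zero_smul]
  simp only [polarF, this, hQ.map_zero, sub_sub, ← two_mul, h2, zero_mul, sub_zero]

def polarBilin : V →ₗ[𝔽₂] V →ₗ[𝔽₂] 𝔽₂ :=
  LinearMap.mk₂ 𝔽₂ (polarF Q) hQ.2.1 hQ.2.2.1 hQ.2.2.2.1 hQ.2.2.2.2

lemma polarBilin_apply (u v : V) : hQ.polarBilin u v = polarF Q u v := rfl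

lemma comp_linearMap (f : W →ₗ[𝔽₂] V) : IsQuadraticForm (Q ∘ f) := by
  have hpol : ∀ u v, polarF (Q ∘ f) u v = hQ.polarBilin (f u) (f v) := by
    intro u v; simp [polarF, polarBilin_apply]
  refine ⟨fun a v => by simpa using hQ.1 a (f v), ?_, ?_, ?_, ?_⟩ <;> intros <;> simp [hpol]

def toLinearMap (hB : ∀ u v, polarF Q u v = 0) : V →ₗ[𝔽₂] 𝔽₂ where
  toFun := Q
  map_add' u v := by rw [apply_add_eq_add_polarF Q, hB, add_zero]
  map_smul' := hQ.map_smul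

@[simp] lemma toLinearMap_apply (hB : ∀ u v, polarF Q u v = 0) (v : V) :
    hQ.toLinearMap hB v = Q v := rfl

/-- One of `(u, v)`, `(u + v, u)`, `(v, u + v)` works. -/
lemma exists_polarF_eq_one_and_eq {u v : V} (huv : polarF Q u v = 1) :
    ∃ u' v' : V, polarF Q u' v' = 1 ∧ Q u' = Q v' := by
  have hsum : Q (u + v) = Q u + Q v + 1 := by rw [apply_add_eq_add_polarF Q, huv]
  have hleft : polarF Q (u + v) u = 1 := by
    rw [polarF_comm, ← polarBilin_apply hQ, map_add]
    simp [polarBilin_apply, hQ.polarF_self, huv]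
  have hright : polarF Q v (u + v) = 1 := by
    rw [← polarBilin_apply hQ, map_add]
    simp [polarBilin_apply, hQ.polarF_self, polarF_comm Q v u, huv]
  rcases zmod2_eq_zero_or_eq_one (Q u) with hu | hu <;>
    rcases zmod2_eq_zero_or_eq_one (Q v) with hv | hv
  · exact ⟨u, v, huv, hu.trans hv.symm⟩
  · exact ⟨u + v, u, hleft, by rw [hsum, hu, hv]; rfl⟩
  · exact ⟨v, u + v, hright, by rw [hsum, hu, hv]; rfl⟩
  · exact ⟨u, v, huv, hu.trans hv.symm⟩

end IsQuadraticForm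

def orthoSum {A B : Type*} (Q : A → 𝔽₂) (R : B → 𝔽₂) : A × B → 𝔽₂ := fun p => Q p.1 + R p.2

local infixr:65 " ⊕q " => orthoSum

namespace IsometricForms

variable {A B C D : Type*} [AddCommGroup A] [Module 𝔽₂ A] [AddCommGroup B] [Module 𝔽₂ B]
  [AddCommGroup C] [Module 𝔽₂ C] [AddCommGroup D] [Module 𝔽₂ D]
  {Q : A → 𝔽₂} {R : B → 𝔽₂} {S : C → 𝔽₂} {T : D → 𝔽₂}

lemma refl (Q : A → 𝔽₂) : IsometricForms Q Q := ⟨LinearEquiv.refl _ _, fun _ => rfl⟩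

lemma symm (h : IsometricForms Q R) : IsometricForms R Q := by
  obtain ⟨f, hf⟩ := h
  exact ⟨f.symm, fun v => by rw [hf, f.apply_symm_apply]⟩

lemma trans (h : IsometricForms Q R) (h' : IsometricForms R S) : IsometricForms Q S := by
  obtain ⟨f, hf⟩ := h
  obtain ⟨g, hg⟩ := h'
  exact ⟨f.trans g, fun v => by rw [hf, hg]; rfl⟩

lemma trans_eq {R' : B → 𝔽₂} (h : IsometricForms Q R) (hR : R = R') : IsometricForms Q R' :=
  hR ▸ h

lemma orthoSum_congr (h : IsometricForms Q S) (h' : IsometricForms R T) :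
    IsometricForms (Q ⊕q R) (S ⊕q T) := by
  obtain ⟨f, hf⟩ := h
  obtain ⟨g, hg⟩ := h'
  exact ⟨f.prodCongr g, fun v => by simp [orthoSum, hf, hg]⟩

lemma orthoSum_comm (Q : A → 𝔽₂) (R : B → 𝔽₂) : IsometricForms (Q ⊕q R) (R ⊕q Q) :=
  ⟨LinearEquiv.prodComm _ _ _, fun _ => add_comm _ _⟩

lemma orthoSum_assoc (Q : A → 𝔽₂) (R : B → 𝔽₂) (S : C → 𝔽₂) :
    IsometricForms ((Q ⊕q R) ⊕q S) (Q ⊕q R ⊕q S) :=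
  ⟨LinearEquiv.prodAssoc _ _ _ _, fun _ => add_assoc _ _ _⟩

lemma orthoSum_of_unique [Unique A] (hQ : Q default = 0) (R : B → 𝔽₂) :
    IsometricForms (Q ⊕q R) R :=
  ⟨LinearEquiv.uniqueProd, fun p => by simp [orthoSum, Unique.eq_default p.1, hQ]⟩

lemma eq_zero (h : IsometricForms Q fun _ : B => 0) : Q = 0 := by
  obtain ⟨f, hf⟩ := h
  exact funext hf

lemma zero_of_finrank_eq [FiniteDimensional 𝔽₂ A] [FiniteDimensional 𝔽₂ B]
    (h : finrank 𝔽₂ A = finrank 𝔽₂ B) :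
    IsometricForms (fun _ : A => (0 : 𝔽₂)) (fun _ : B => 0) :=
  ⟨LinearEquiv.ofFinrankEq A B h, fun _ => rfl⟩

end IsometricForms

def LinearMap.prodKerEquivOfSection {R V U : Type*} [Ring R] [AddCommGroup V] [Module R V]
    [AddCommGroup U] [Module R U] (φ : V →ₗ[R] U) (σ : U →ₗ[R] V) (hσ : ∀ u, φ (σ u) = u) :
    V ≃ₗ[R] U × ker φ where
  toFun x := (φ x, ⟨x - σ (φ x), by simp [hσ]⟩)
  invFun p := σ p.1 + p.2
  map_add' x y := by ext <;> simp only [map_add, Prod.mk_add_mk, AddMemClass.mk_add_mk]; abel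
  map_smul' a x := by ext <;> simp [smul_sub]
  left_inv x := by simp
  right_inv p := by ext <;> simp [hσ, mem_ker.mp p.2.2]

section Splitting

variable {V U : Type*} [AddCommGroup V] [Module 𝔽₂ V] [AddCommGroup U] [Module 𝔽₂ U]

lemma isometricForms_orthoSum_ker (Q : V → 𝔽₂) (φ : V →ₗ[𝔽₂] U) (σ : U →ₗ[𝔽₂] V)
    (hσ : ∀ u, φ (σ u) = u) (horth : ∀ u, ∀ r ∈ ker φ, Q (σ u + r) = Q (σ u) + Q r) :
    IsometricForms Q ((Q ∘ σ) ⊕q fun r : ker φ => Q r) :=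
  ⟨φ.prodKerEquivOfSection σ hσ, fun x => by
    simpa [orthoSum, LinearMap.prodKerEquivOfSection] using
      horth (φ x) (x - σ (φ x)) (by simp [hσ])⟩

lemma LinearMap.isometricForms_qone_orthoSum_zero [FiniteDimensional 𝔽₂ U] (L : U →ₗ[𝔽₂] 𝔽₂)
    (hL : L ≠ 0) {n : ℕ} (hn : finrank 𝔽₂ U = n + 1) :
    IsometricForms L (Qone ⊕q fun _ : Fin n → 𝔽₂ => 0) := by
  obtain ⟨v, hv⟩ := LinearMap.surjective hL 1
  let σ : 𝔽₂ →ₗ[𝔽₂] U := LinearMap.id.smulRight v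
  have hσ : ∀ a, L (σ a) = a := fun a => by simp [σ, hv]
  have hsplit := isometricForms_orthoSum_ker L L σ hσ fun _ _ _ => map_add L _ _
  have hline : L ∘ σ = Qone := funext fun a => by
    simp only [Function.comp_apply, hσ, Qone]; revert a; decide
  have hker : (fun r : ker L => L r) = fun _ => 0 := funext fun r => r.2
  have hdim : finrank 𝔽₂ (ker L) = finrank 𝔽₂ (Fin n → 𝔽₂) := by
    have := Module.Dual.finrank_ker_add_one_of_ne_zero hL
    rw [finrank_fin_fun]
    omega
  rw [hline, hker] at hsplit
  exact hsplit.trans (.orthoSum_congr (.refl _) (.zero_of_finrank_eq hdim))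

def planeForm (ε : 𝔽₂) : 𝔽₂ × 𝔽₂ → 𝔽₂ := fun p => p.1 * p.2 + ε * (p.1 + p.2)

lemma planeForm_zero : planeForm 0 = Hplus := by
  funext p; simp [planeForm, Hplus]

lemma planeForm_one : planeForm 1 = Hminus := by
  funext p; revert p; decide

lemma IsQuadraticForm.exists_isometricForms_planeForm_orthoSum [FiniteDimensional 𝔽₂ V]
    {Q : V → 𝔽₂} (hQ : IsQuadraticForm Q) (hB : ¬ ∀ u v, polarF Q u v = 0) :
    ∃ (ε : 𝔽₂) (W : Submodule 𝔽₂ V), finrank 𝔽₂ W + 2 = finrank 𝔽₂ V ∧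
      IsometricForms Q (planeForm ε ⊕q fun w : W => Q w) := by
  push Not at hB
  obtain ⟨u₀, v₀, huv₀⟩ := hB
  obtain ⟨u, v, huv, hQuv⟩ :=
    hQ.exists_polarF_eq_one_and_eq ((zmod2_eq_zero_or_eq_one _).resolve_left huv₀)
  set B := hQ.polarBilin
  have hBuv : B u v = 1 := huv
  have hBvu : B v u = 1 := by rw [← hBuv]; exact polarF_comm Q v u
  have hBuu : B u u = 0 := hQ.polarF_self u
  have hBvv : B v v = 0 := hQ.polarF_self v
  let φ : V →ₗ[𝔽₂] 𝔽₂ × 𝔽₂ := (B v).prod (B u)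
  let σ : 𝔽₂ × 𝔽₂ →ₗ[𝔽₂] V := (fst 𝔽₂ 𝔽₂ 𝔽₂).smulRight u + (snd 𝔽₂ 𝔽₂ 𝔽₂).smulRight v
  have hσ : ∀ c, φ (σ c) = c := fun c => by
    ext <;> simp [φ, σ, hBuu, hBvv, hBuv, hBvu]
  have horth : ∀ c, ∀ r ∈ ker φ, Q (σ c + r) = Q (σ c) + Q r := fun c r hr => by
    have hr' : B v r = 0 ∧ B u r = 0 := by simpa [φ, Prod.ext_iff] using hr
    rw [apply_add_eq_add_polarF Q, ← polarBilin_apply hQ]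
    simp [σ, B, hr']
  have hplane : Q ∘ σ = planeForm (Q u) := funext fun c => by
    have hpol : polarF Q (c.1 • u) (c.2 • v) = c.1 * c.2 := by
      change B (c.1 • u) (c.2 • v) = _
      simp [hBuv, mul_comm]
    change Q (c.1 • u + c.2 • v) = _
    rw [apply_add_eq_add_polarF Q, hQ.map_smul, hQ.map_smul, hpol, ← hQuv, planeForm]
    ring
  refine ⟨Q u, ker φ, ?_, hplane ▸ isometricForms_orthoSum_ker Q φ σ hσ horth⟩
  rw [(φ.prodKerEquivOfSection σ hσ).finrank_eq, finrank_prod, finrank_prod, finrank_self,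
    add_comm]

end Splitting

def planeSum {k : ℕ} (s : Fin k → 𝔽₂) : (Fin k → 𝔽₂ × 𝔽₂) → 𝔽₂ :=
  fun p => ∑ i, planeForm (s i) (p i)

lemma planeSum_zero (k : ℕ) : planeSum (0 : Fin k → 𝔽₂) = fun p => ∑ i, Hplus (p i) := by
  funext p
  simp only [planeSum, Pi.zero_apply, planeForm_zero]

lemma isometricForms_planeSum_cons {k : ℕ} (a : 𝔽₂) (s : Fin k → 𝔽₂) :
    IsometricForms (planeSum (Fin.cons a s)) (planeForm a ⊕q planeSum s) :=
  ⟨(Fin.consLinearEquiv 𝔽₂ fun _ => 𝔽₂ × 𝔽₂).symm, fun p => by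
    simp [planeSum, orthoSum, Fin.sum_univ_succ, Fin.tail]⟩

lemma isometricForms_planeForm_zero_orthoSum_planeSum_zero (k : ℕ) :
    IsometricForms (planeForm 0 ⊕q planeSum (0 : Fin k → 𝔽₂))
      (planeSum (0 : Fin (k + 1) → 𝔽₂)) := by
  rw [← Matrix.cons_zero_zero]
  exact (isometricForms_planeSum_cons 0 0).symm

theorem IsQuadraticForm.exists_isometricForms_planeSum_orthoSum {V : Type*} [AddCommGroup V]
    [Module 𝔽₂ V] [FiniteDimensional 𝔽₂ V] {Q : V → 𝔽₂} (hQ : IsQuadraticForm Q) :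
    ∃ (k m : ℕ) (s : Fin k → 𝔽₂) (L : (Fin m → 𝔽₂) →ₗ[𝔽₂] 𝔽₂),
      2 * k + m = finrank 𝔽₂ V ∧ IsometricForms Q (planeSum s ⊕q L) := by
  induction h : finrank 𝔽₂ V using Nat.strong_induction_on generalizing V with
  | _ n ih =>
  by_cases hB : ∀ u v, polarF Q u v = 0
  · let e := LinearEquiv.ofFinrankEq V (Fin n → 𝔽₂) (by rw [h, finrank_fin_fun])
    refine ⟨0, n, Fin.elim0, hQ.toLinearMap hB ∘ₗ e.symm, by omega, ?_⟩
    exact IsometricForms.trans ⟨e, fun v => by simp⟩ (.symm (.orthoSum_of_unique rfl _))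
  · obtain ⟨ε, W, hW, hQW⟩ := hQ.exists_isometricForms_planeForm_orthoSum hB
    obtain ⟨k, m, s, L, hkm, hW⟩ := ih _ (by omega) (hQ.comp_linearMap W.subtype) rfl
    refine ⟨k + 1, m, Fin.cons ε s, L, by omega, ?_⟩
    exact (hQW.trans (.orthoSum_congr (.refl _) hW)).trans <|
      (IsometricForms.orthoSum_assoc _ _ _).symm.trans <|
      .orthoSum_congr (isometricForms_planeSum_cons ε s).symm (.refl _)

def planeFormOneProdEquiv : ((𝔽₂ × 𝔽₂) × (𝔽₂ × 𝔽₂)) ≃ₗ[𝔽₂] ((𝔽₂ × 𝔽₂) × (𝔽₂ × 𝔽₂)) where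
  toFun v := ((v.1.2 + v.2.2, v.1.2 + v.2.1),
    (v.1.1 + v.2.1 + v.2.2, v.1.1 + v.1.2 + v.2.1 + v.2.2))
  invFun v := ((v.1.1 + v.1.2 + v.2.1, v.2.1 + v.2.2),
    (v.1.2 + v.2.1 + v.2.2, v.1.1 + v.2.1 + v.2.2))
  map_add' a b := by revert a b; decide
  map_smul' c a := by revert c a; decide
  left_inv a := by revert a; decide
  right_inv a := by revert a; decide

lemma isometricForms_planeForm_orthoSum_planeForm (a b : 𝔽₂) :
    IsometricForms (planeForm a ⊕q planeForm b) (planeForm (a + b) ⊕q planeForm 0) := by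
  rcases zmod2_eq_zero_or_eq_one a with rfl | rfl <;>
    rcases zmod2_eq_zero_or_eq_one b with rfl | rfl
  · exact .refl _
  · exact .orthoSum_comm _ _
  · exact .refl _
  · exact ⟨planeFormOneProdEquiv, by decide⟩

/-- The twist that survives is the Arf invariant `∑ i, s i`. -/
lemma isometricForms_planeSum {k : ℕ} (s : Fin (k + 1) → 𝔽₂) :
    IsometricForms (planeSum s) (planeForm (∑ i, s i) ⊕q planeSum (0 : Fin k → 𝔽₂)) := by
  obtain ⟨a, t, rfl⟩ : ∃ a t, s = Fin.cons a t := ⟨s 0, Fin.tail s, (Fin.cons_self_tail s).symm⟩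
  rw [Fin.sum_cons]
  induction k generalizing a with
  | zero => simpa [Subsingleton.elim t 0] using isometricForms_planeSum_cons a t
  | succ k ih =>
    obtain ⟨b, t, rfl⟩ : ∃ b t', t = Fin.cons b t' :=
      ⟨t 0, Fin.tail t, (Fin.cons_self_tail t).symm⟩
    rw [Fin.sum_cons]
    exact (isometricForms_planeSum_cons a _).trans <|
      (IsometricForms.orthoSum_congr (.refl _) (ih b t)).trans <|
      (IsometricForms.orthoSum_assoc _ _ _).symm.trans <|
      (IsometricForms.orthoSum_congr (isometricForms_planeForm_orthoSum_planeForm _ _)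
        (.refl _)).trans <|
      (IsometricForms.orthoSum_assoc _ _ _).trans <|
      .orthoSum_congr (.refl _) (isometricForms_planeForm_zero_orthoSum_planeSum_zero k)

/-- The shear `(p, z) ↦ (p, z + (∑ i, s i (x i + y i)) • v)`, where `L v = 1`, absorbs all twists
into `L`. -/
lemma isometricForms_planeSum_orthoSum_linearMap {U : Type*} [AddCommGroup U] [Module 𝔽₂ U]
    {k : ℕ} (s : Fin k → 𝔽₂) (L : U →ₗ[𝔽₂] 𝔽₂) (hL : L ≠ 0) :
    IsometricForms (planeSum s ⊕q L) (planeSum (0 : Fin k → 𝔽₂) ⊕q L) := by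
  obtain ⟨v, hv⟩ := LinearMap.surjective hL 1
  let twist : (Fin k → 𝔽₂ × 𝔽₂) →ₗ[𝔽₂] 𝔽₂ :=
    ∑ i, s i • (fst 𝔽₂ 𝔽₂ 𝔽₂ + snd 𝔽₂ 𝔽₂ 𝔽₂) ∘ₗ LinearMap.proj i
  refine ⟨(LinearEquiv.refl _ _).skewProd (LinearEquiv.refl _ _) (twist.smulRight v), ?_⟩
  rintro ⟨p, z⟩
  have htwist : twist p = ∑ i, s i * ((p i).1 + (p i).2) := by simp [twist]
  have hsum : planeSum s p = planeSum 0 p + twist p := by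
    simp only [htwist, planeSum, planeForm, Pi.zero_apply, zero_mul, add_zero,
      ← Finset.sum_add_distrib]
  simp only [orthoSum, LinearEquiv.skewProd_apply, LinearEquiv.refl_apply, smulRight_apply,
    map_add, map_smul, hv, smul_eq_mul, mul_one, hsum]
  ring

theorem statement_0_general {V : Type*} [AddCommGroup V] [Module (ZMod 2) V]
    [FiniteDimensional (ZMod 2) V] (ℓ : ℕ)
    (hdim : Module.finrank (ZMod 2) V = ℓ)
    (Q : V → ZMod 2) (hQ : IsQuadraticForm Q) (hQne : Q ≠ fun _ => 0) :
    (∃ m₁ m₂ : ℕ, 1 ≤ m₁ ∧ 2 * m₁ + m₂ = ℓ ∧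
      IsometricForms Q
        (fun p : (Fin m₁ → ZMod 2 × ZMod 2) × (Fin m₂ → ZMod 2) =>
          ∑ i, Hplus (p.1 i))) ∨
    (∃ m₁ m₂ : ℕ, 1 ≤ m₁ ∧ 2 * m₁ + m₂ = ℓ ∧
      IsometricForms Q
        (fun p : (ZMod 2 × ZMod 2) × (Fin (m₁ - 1) → ZMod 2 × ZMod 2) × (Fin m₂ → ZMod 2) =>
          Hminus p.1 + ∑ i, Hplus (p.2.1 i))) ∨
    (∃ m₁ m₂ : ℕ, 1 ≤ m₂ ∧ 2 * m₁ + m₂ = ℓ ∧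
      IsometricForms Q
        (fun p : (Fin m₁ → ZMod 2 × ZMod 2) × ZMod 2 × (Fin (m₂ - 1) → ZMod 2) =>
          (∑ i, Hplus (p.1 i)) + Qone p.2.1)) := by
  obtain ⟨k, m, s, L, hkm, hQL⟩ := hQ.exists_isometricForms_planeSum_orthoSum
  by_cases hL : L = 0
  · subst hL
    obtain _ | k := k
    · exact absurd (hQL.trans (.orthoSum_of_unique rfl _)).eq_zero hQne
    have hArf := hQL.trans <|
      ((isometricForms_planeSum s).orthoSum_congr (.refl _)).trans (.orthoSum_assoc _ _ _)
    rcases zmod2_eq_zero_or_eq_one (∑ i, s i) with hσ | hσ <;> rw [hσ] at hArf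
    · refine .inl ⟨k + 1, m, by omega, by omega, ?_⟩
      refine (hArf.trans <| (IsometricForms.orthoSum_assoc _ _ _).symm.trans <|
        .orthoSum_congr (isometricForms_planeForm_zero_orthoSum_planeSum_zero k)
          (.refl _)).trans_eq ?_
      funext p
      simp [orthoSum, planeSum_zero]
    · refine .inr (.inl ⟨k + 1, m, by omega, by omega, hArf.trans_eq ?_⟩)
      funext p
      simp [orthoSum, planeForm_one, planeSum_zero]
  · have hm := Module.Dual.finrank_ker_add_one_of_ne_zero hL
    rw [finrank_fin_fun] at hm
    refine .inr (.inr ⟨k, m, by omega, by omega, ?_⟩)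
    refine (hQL.trans <| (isometricForms_planeSum_orthoSum_linearMap s L hL).trans <|
      .orthoSum_congr (.refl _) (L.isometricForms_qone_orthoSum_zero hL
        (by rw [finrank_fin_fun]; omega))).trans_eq ?_
    funext p
    simp [orthoSum, planeSum_zero]

/-- Classification of nonzero quadratic forms over `𝔽₂`:  every nonzero quadratic form on an
`ℓ`-dimensional `𝔽₂`-vector space is isometric to `H₊^{⊕m₁} ⊕ 0^{⊕m₂}` (`m₁ ≥ 1`), or to
`H₋ ⊕ H₊^{⊕(m₁−1)} ⊕ 0^{⊕m₂}` (`m₁ ≥ 1`), or to `H₊^{⊕m₁} ⊕ Q₁ ⊕ 0^{⊕(m₂−1)}` (`m₂ ≥ 1`),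
where `2m₁ + m₂ = ℓ`. -/
theorem statement_0 {V : Type*} [AddCommGroup V] [Module (ZMod 2) V]
    [FiniteDimensional (ZMod 2) V] (ℓ : ℕ) (hℓ : 1 ≤ ℓ)
    (hdim : Module.finrank (ZMod 2) V = ℓ)
    (Q : V → ZMod 2) (hQ : IsQuadraticForm Q) (hQne : Q ≠ fun _ => 0) :
    (∃ m₁ m₂ : ℕ, 1 ≤ m₁ ∧ 2 * m₁ + m₂ = ℓ ∧
      IsometricForms Q
        (fun p : (Fin m₁ → ZMod 2 × ZMod 2) × (Fin m₂ → ZMod 2) =>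
          ∑ i, Hplus (p.1 i))) ∨
    (∃ m₁ m₂ : ℕ, 1 ≤ m₁ ∧ 2 * m₁ + m₂ = ℓ ∧
      IsometricForms Q
        (fun p : (ZMod 2 × ZMod 2) × (Fin (m₁ - 1) → ZMod 2 × ZMod 2) × (Fin m₂ → ZMod 2) =>
          Hminus p.1 + ∑ i, Hplus (p.2.1 i))) ∨
    (∃ m₁ m₂ : ℕ, 1 ≤ m₂ ∧ 2 * m₁ + m₂ = ℓ ∧
      IsometricForms Q
        (fun p : (Fin m₁ → ZMod 2 × ZMod 2) × ZMod 2 × (Fin (m₂ - 1) → ZMod 2) =>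
          (∑ i, Hplus (p.1 i)) + Qone p.2.1)) :=
  statement_0_general ℓ hdim Q hQ hQne
end

section
/- The quadratic form H₊ ⊕ Q₁ on 𝔽₂³, given by Q(x,y,z) = xy + z², is not admissible. -/
/-- A form `Q` on an `𝔽₂`-vector space is admissible if there is a basis `v₁,…,v_ℓ` with
`Q(vᵢ) = 1` for all `i`, and for every `i` there is `j` with `B_Q(vᵢ,vⱼ) = 1`. -/
def IsAdmissible {V : Type*} [AddCommGroup V] [Module (ZMod 2) V] (Q : V → ZMod 2) : Prop :=
  ∃ (ℓ : ℕ) (b : Module.Basis (Fin ℓ) (ZMod 2) V),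
    (∀ i, Q (b i) = 1) ∧ (∀ i, ∃ j, polarF Q (b i) (b j) = 1)

/-! The polar form of `xy + z²` is `xy' + x'y`, so a vector `(x, y, z)` with `Q = 1` that is not in
its radical has `(x, y) ≠ 0` and `z = 1 + xy`, hence lies on the plane `x + y + z = 0`. A basis cannot
lie in a plane. -/

def coordSum : (ZMod 2 × ZMod 2) × ZMod 2 →ₗ[ZMod 2] ZMod 2 :=
  (LinearMap.id.coprod LinearMap.id).coprod LinearMap.id

lemma coordSum_apply (v : (ZMod 2 × ZMod 2) × ZMod 2) : coordSum v = v.1.1 + v.1.2 + v.2 := rfl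

lemma coordSum_eq_zero_of_polarF_eq_one {v w : (ZMod 2 × ZMod 2) × ZMod 2}
    (hv : Hplus v.1 + Qone v.2 = 1)
    (hvw : polarF (fun p : (ZMod 2 × ZMod 2) × ZMod 2 => Hplus p.1 + Qone p.2) v w = 1) :
    coordSum v = 0 := by
  revert v w
  decide

lemma Module.Basis.not_forall_apply_eq_zero {ι R M : Type*} [Semiring R] [AddCommMonoid M]
    [Module R M] (b : Module.Basis ι R M) {f : M →ₗ[R] R} (hf : f ≠ 0) : ¬ ∀ i, f (b i) = 0 :=
  fun h => hf (b.ext h)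

/-- The quadratic form H₊ ⊕ Q₁ on 𝔽₂³, given by Q(x,y,z) = xy + z², is not admissible. -/
theorem statement_6 :
    ¬ IsAdmissible (fun p : (ZMod 2 × ZMod 2) × ZMod 2 => Hplus p.1 + Qone p.2) := by
  rintro ⟨ℓ, b, hQ, hB⟩
  have hcoordSum : coordSum ≠ 0 := fun h => by
    simpa [coordSum_apply] using LinearMap.congr_fun h ((0, 0), 1)
  refine b.not_forall_apply_eq_zero hcoordSum fun i => ?_
  obtain ⟨j, hj⟩ := hB i
  exact coordSum_eq_zero_of_polarF_eq_one (hQ i) hj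
end

section
/- For every m ≥ 2, the quadratic form H₊^{⊕m} ⊕ Q₁ on 𝔽₂^{2m+1}, given by Q(z₁,…,z_{2m},w) = z₁z₂ + ⋯ + z_{2m−1}z_{2m} + w², is admissible. -/
lemma polarF_eq_one {V : Type*} [Add V] {Q : V → ZMod 2} {u v : V}
    (hu : Q u = 1) (hv : Q v = 1) (huv : Q (u + v) = 1) : polarF Q u v = 1 := by
  rw [polarF, hu, hv, huv]
  decide

lemma IsAdmissible.of_basis {V ι : Type*} [AddCommGroup V] [Module (ZMod 2) V] [Finite ι]
    {Q : V → ZMod 2} (b : Module.Basis ι (ZMod 2) V) (hQ : ∀ i, Q (b i) = 1)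
    (hB : ∀ i, ∃ j, polarF Q (b i) (b j) = 1) : IsAdmissible Q := by
  refine ⟨Nat.card ι, b.reindex (Finite.equivFin ι), fun i => ?_, fun i => ?_⟩
  · simpa using hQ _
  · obtain ⟨j, hj⟩ := hB ((Finite.equivFin ι).symm i)
    exact ⟨Finite.equivFin ι j, by simpa using hj⟩

namespace HplusSumQone

open Module

abbrev V (m : ℕ) := (Fin m → ZMod 2 × ZMod 2) × ZMod 2

def Q (m : ℕ) (p : V m) : ZMod 2 := (∑ i, Hplus (p.1 i)) + Qone p.2

abbrev Idx (m : ℕ) := (Σ _ : Fin m, Fin 2) ⊕ Unit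

noncomputable def stdBasis (m : ℕ) : Basis (Idx m) (ZMod 2) (V m) :=
  (Pi.basis fun _ => Basis.finTwoProd (ZMod 2)).prod (Basis.singleton Unit (ZMod 2))

variable {m : ℕ}

lemma Q_single (i : Fin m) (a : ZMod 2 × ZMod 2) (c : ZMod 2) :
    Q m (Pi.single i a, c) = Hplus a + Qone c := by
  rw [Q, Fintype.sum_eq_single i fun k hk => by simp [hk, Hplus]]
  simp

lemma Q_single_add_single {i j : Fin m} (hij : i ≠ j) (a b : ZMod 2 × ZMod 2) (c : ZMod 2) :
    Q m (Pi.single i a + Pi.single j b, c) = Hplus a + Hplus b + Qone c := by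
  rw [Q, Fintype.sum_eq_add i j hij fun k hk => by simp [hk, Hplus]]
  simp [hij, hij.symm]

noncomputable def admissibleFamily (i₀ j₀ : Fin m) : Idx m → V m
  | .inl ⟨i, t⟩ => (Pi.single i (Basis.finTwoProd (ZMod 2) t), 1)
  | .inr _ => (Pi.single i₀ 1 + Pi.single j₀ 1, 1)

variable {i₀ j₀ : Fin m}

lemma stdBasis_mem_span_admissibleFamily (h : i₀ ≠ j₀) (k : Idx m) :
    stdBasis m k ∈ Submodule.span (ZMod 2) (Set.range (admissibleFamily i₀ j₀)) := by
  set f := admissibleFamily i₀ j₀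
  have mem (k : Idx m) : f k ∈ Submodule.span (ZMod 2) (Set.range f) :=
    Submodule.subset_span (Set.mem_range_self k)
  have hw : stdBasis m (.inr ()) =
      f (.inr ()) + f (.inl ⟨i₀, 0⟩) + f (.inl ⟨i₀, 1⟩) + f (.inl ⟨j₀, 0⟩) + f (.inl ⟨j₀, 1⟩) := by
    refine Prod.ext (funext fun k => ?_) (by simp [f, stdBasis, admissibleFamily]; decide)
    by_cases hi : k = i₀ <;> by_cases hj : k = j₀ <;>
      simp [f, stdBasis, admissibleFamily, hi, hj, h, h.symm] <;> rfl
  have hw_mem : stdBasis m (.inr ()) ∈ Submodule.span (ZMod 2) (Set.range f) := by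
    rw [hw]
    apply_rules [add_mem, mem]
  rcases k with ⟨i, t⟩ | ⟨⟩
  · have hx : stdBasis m (.inl ⟨i, t⟩) = f (.inl ⟨i, t⟩) + stdBasis m (.inr ()) := by
      simp [f, stdBasis, admissibleFamily]
      rfl
    rw [hx]
    exact add_mem (mem _) hw_mem
  · exact hw_mem

noncomputable def admissibleBasis (h : i₀ ≠ j₀) : Basis (Idx m) (ZMod 2) (V m) :=
  basisOfTopLeSpanOfCardEqFinrank (admissibleFamily i₀ j₀)
    (by
      rw [← (stdBasis m).span_eq, Submodule.span_le, Set.range_subset_iff]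
      exact stdBasis_mem_span_admissibleFamily h)
    (finrank_eq_card_basis (stdBasis m)).symm

lemma admissibleBasis_apply (h : i₀ ≠ j₀) (k : Idx m) :
    admissibleBasis h k = admissibleFamily i₀ j₀ k := by
  simp [admissibleBasis]

lemma Q_admissibleFamily (h : i₀ ≠ j₀) (k : Idx m) : Q m (admissibleFamily i₀ j₀ k) = 1 := by
  rcases k with ⟨i, t⟩ | ⟨⟩
  · rw [admissibleFamily, Q_single]
    fin_cases t <;> simp [Hplus, Qone]
  · rw [admissibleFamily, Q_single_add_single h]
    decide

lemma exists_polarF_admissibleFamily_eq_one (h : i₀ ≠ j₀) (k : Idx m) :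
    ∃ k', polarF (Q m) (admissibleFamily i₀ j₀ k) (admissibleFamily i₀ j₀ k') = 1 := by
  rcases k with ⟨i, t⟩ | ⟨⟩
  · refine ⟨.inl ⟨i, t.rev⟩, polarF_eq_one (Q_admissibleFamily h _) (Q_admissibleFamily h _) ?_⟩
    rw [admissibleFamily, admissibleFamily, Prod.mk_add_mk, ← Pi.single_add, Q_single]
    fin_cases t <;> simp [Hplus, Qone, CharTwo.add_self_eq_zero]
  · refine ⟨.inl ⟨j₀, 1⟩, polarF_eq_one (Q_admissibleFamily h _) (Q_admissibleFamily h _) ?_⟩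
    rw [admissibleFamily, admissibleFamily, Prod.mk_add_mk, add_assoc, ← Pi.single_add,
      Q_single_add_single h]
    simp [Hplus, Qone, CharTwo.add_self_eq_zero]

end HplusSumQone

open HplusSumQone in
/-- For every m ≥ 2, the quadratic form H₊^{⊕m} ⊕ Q₁ on 𝔽₂^{2m+1} is admissible. -/
theorem statement_7 (m : ℕ) (hm : 2 ≤ m) :
    IsAdmissible
      (fun p : (Fin m → ZMod 2 × ZMod 2) × ZMod 2 =>
        (∑ i, Hplus (p.1 i)) + Qone p.2) := by
  have h : (⟨0, by omega⟩ : Fin m) ≠ ⟨1, hm⟩ := by simp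
  refine IsAdmissible.of_basis (Q := Q m) (admissibleBasis h) (fun k => ?_) (fun k => ?_)
  · rw [admissibleBasis_apply]
    exact Q_admissibleFamily h k
  · simpa only [admissibleBasis_apply] using exists_polarF_admissibleFamily_eq_one h k
end

section
/- Let G be a group generated by a finite set S, and let c ∈ G be a central element with c ≠ 1 and c² = 1. Assume: (i) s² = c for every s ∈ S; (ii) for all s, t ∈ S, either st = ts or sts⁻¹ = t⁻¹; (iii) there exist s, t ∈ S with st ≠ ts. Then G is a finite 2-group, the commutator subgroup [G,G] equals ⟨c⟩, the subgroup generated by {g² : g ∈ G} equals ⟨c⟩, and the Frattini subgroup Φ(G) equals ⟨c⟩; in particular, G is a generalized extraspecial 2-group. -/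
/-! With `N = ⟨c⟩` central of order 2, the images of `S` in `G ⧸ N` are commuting involutions,
so `G ⧸ N` is elementary abelian: it is finite, its Frattini subgroup is trivial, and every
square of `G` lies in `N`. Since `⁅g, h⁆ = g² (g⁻¹h)² h⁻²`, we get `[G,G] ≤ ⟨g²⟩ ≤ N`, and a
non-commuting pair `s, t ∈ S` gives `⁅s, t⁆ = c⁻¹`. Finally a central element of `[G,G]` lies in
every maximal subgroup `M`: otherwise `G = M⟨c⟩`, so `M` is normal with cyclic quotient and
contains `[G,G]`. Hence `N ≤ Φ(G) ≤ N`. -/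

/-- A generalized extraspecial 2-group: a finite 2-group whose Frattini subgroup is central
and coincides with the commutator subgroup, being cyclic of order 2. -/
def IsGeneralizedExtraspecial (G : Type*) [Group G] : Prop :=
  Finite G ∧ IsPGroup 2 G ∧ frattini G ≤ Subgroup.center G ∧
    frattini G = commutator G ∧ Nat.card (frattini G) = 2

open Subgroup
open scoped commutatorElement

theorem zpow_eq_one_or_self_of_sq_eq_one {G : Type*} [Group G] {x : G} (hx : x ^ 2 = 1)
    (k : ℤ) : x ^ k = 1 ∨ x ^ k = x := by
  have hx' : x ^ (2 : ℤ) = 1 := by exact_mod_cast hx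
  rcases Int.even_or_odd k with ⟨m, rfl⟩ | ⟨m, rfl⟩
  · exact .inl (by rw [← two_mul, zpow_mul, hx', one_zpow])
  · exact .inr (by rw [zpow_add, zpow_one, zpow_mul, hx', one_zpow, one_mul])

section SqEqOne

variable {E : Type*} [Group E]

theorem commute_of_forall_sq_eq_one (h : ∀ x : E, x ^ 2 = 1) (a b : E) : Commute a b :=
  Commute.of_orderOf_dvd_two (fun x => orderOf_dvd_of_pow_eq_one (h x)) a b

theorem finite_of_forall_sq_eq_one [Group.FG E] (h : ∀ x : E, x ^ 2 = 1) : Finite E :=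
  letI : CommGroup E :=
    { ‹Group E› with mul_comm := fun a b => (commute_of_forall_sq_eq_one h a b).eq }
  CommGroup.finite_of_fg_isMulTorsion E fun x => isOfFinOrder_iff_pow_eq_one.2 ⟨2, two_pos, h x⟩

theorem exists_isCoatom_notMem_of_forall_sq_eq_one (h : ∀ x : E, x ^ 2 = 1) {x : E}
    (hx : x ≠ 1) : ∃ M : Subgroup E, IsCoatom M ∧ x ∉ M := by
  have hchain : ∀ C ⊆ {H : Subgroup E | x ∉ H}, IsChain (· ≤ ·) C →
      ∀ H ∈ C, ∃ ub ∈ {H : Subgroup E | x ∉ H}, ∀ K ∈ C, K ≤ ub := by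
    intro C hC hC' H hH
    refine ⟨sSup C, fun hxC => ?_, fun K hK => le_sSup hK⟩
    obtain ⟨K, hK, hxK⟩ := (mem_sSup_of_directedOn ⟨H, hH⟩ hC'.directedOn).1 hxC
    exact hC hK hxK
  obtain ⟨M, -, hxM, hmax⟩ := zorn_le_nonempty₀ _ hchain ⊥ (by simpa using hx)
  have hx_mem : ∀ K, M < K → x ∈ K := fun K hK => by_contra fun hxK => hK.not_ge (hmax hxK hK.le)
  refine ⟨M, ⟨fun hM => hxM (hM ▸ mem_top x), fun K hK => (eq_top_iff' K).2 fun z => ?_⟩, hxM⟩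
  by_cases hzM : z ∈ M
  · exact hK.le hzM
  let _ : CommGroup E :=
    { ‹Group E› with mul_comm := fun a b => (commute_of_forall_sq_eq_one h a b).eq }
  -- `M` is maximal avoiding `x`, so `x ∈ M ⊔ ⟨z⟩ = M ∪ M z`, and `x ∉ M` forces `z ∈ M x ⊆ K`.
  obtain ⟨m, hm, w, hw, hmw⟩ := mem_sup.1 (hx_mem _ (left_lt_sup.2 (by rwa [zpowers_le])))
  obtain ⟨k, rfl⟩ := mem_zpowers_iff.1 hw
  rcases zpow_eq_one_or_self_of_sq_eq_one (h z) k with hk | hk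
  · rw [hk, mul_one] at hmw
    exact absurd (hmw ▸ hm) hxM
  · rw [hk] at hmw
    rw [show z = m⁻¹ * x by rw [← hmw, inv_mul_cancel_left]]
    exact K.mul_mem (K.inv_mem (hK.le hm)) (hx_mem K hK)

theorem frattini_eq_bot_of_forall_sq_eq_one (h : ∀ x : E, x ^ 2 = 1) : frattini E = ⊥ := by
  refine eq_bot_iff.2 fun x hx => mem_bot.2 ?_
  by_contra hx1
  obtain ⟨M, hM, hxM⟩ := exists_isCoatom_notMem_of_forall_sq_eq_one h hx1
  exact hxM (frattini_le_coatom hM hx)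

theorem forall_sq_eq_one_of_closure_eq_top {S : Set E} (hS : closure S = ⊤)
    (hcomm : ∀ x ∈ S, ∀ y ∈ S, x * y = y * x) (hsq : ∀ x ∈ S, x ^ 2 = 1) (a : E) :
    a ^ 2 = 1 := by
  have hcent := closure_le_centralizer_centralizer S
  rw [hS] at hcent
  have hab : ∀ a b : E, Commute a b := fun a b =>
    Set.centralizer_centralizer_comm_of_comm hcomm a (hcent (mem_top a)) b (hcent (mem_top b))
  induction (hS ▸ mem_top a : a ∈ closure S) using closure_induction with
  | mem x hx => exact hsq x hx
  | one => exact one_pow 2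
  | mul x y _ _ hx hy => rw [(hab x y).mul_pow, hx, hy, one_mul]
  | inv x _ hx => rw [inv_pow, hx, inv_one]

end SqEqOne

section

variable {G : Type*} [Group G]

theorem normal_of_le_center {N : Subgroup G} (hN : N ≤ center G) : N.Normal :=
  ⟨fun n hn g => by rwa [(mem_center_iff.1 (hN hn) g), mul_inv_cancel_right]⟩

theorem commutatorElement_eq_sq_mul_sq_mul_inv_sq (g h : G) :
    ⁅g, h⁆ = g ^ 2 * (g⁻¹ * h) ^ 2 * (h ^ 2)⁻¹ := by
  simp only [commutatorElement_def, pow_two]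
  group

theorem commutator_le_closure_sq : commutator G ≤ closure {g : G | ∃ x : G, g = x ^ 2} := by
  rw [commutator_def, commutator_le]
  rintro g - h -
  rw [commutatorElement_eq_sq_mul_sq_mul_inv_sq]
  exact mul_mem (mul_mem (subset_closure ⟨g, rfl⟩) (subset_closure ⟨_, rfl⟩))
    (inv_mem (subset_closure ⟨h, rfl⟩))

theorem commutatorElement_eq_inv_sq_of_conj_eq_inv {s t : G} (h : s * t * s⁻¹ = t⁻¹) :
    ⁅s, t⁆ = (t ^ 2)⁻¹ := by
  rw [commutatorElement_def, h, pow_two, mul_inv_rev]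

theorem mem_frattini_of_mem_center_of_mem_commutator {z : G} (hz : z ∈ center G)
    (hzc : z ∈ commutator G) : z ∈ frattini G := by
  simp only [frattini, Order.radical, mem_iInf]
  intro M hM
  by_contra hzM
  have htop : M ⊔ zpowers z = ⊤ := hM.2 _ (left_lt_sup.2 (by rwa [zpowers_le]))
  have : M.Normal := normalizer_eq_top_iff.1 <| top_le_iff.1 <|
    htop ▸ sup_le le_normalizer (zpowers_le.2 (center_le_normalizer _ hz))
  have : IsCyclic (G ⧸ M) := isCyclic_iff_exists_zpowers_eq_top.2 ⟨z, by
    change zpowers (QuotientGroup.mk' M z) = ⊤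
    rw [← MonoidHom.map_zpowers (QuotientGroup.mk' M), ← bot_sup_eq (map _ _),
      ← QuotientGroup.map_mk'_self M, ← Subgroup.map_sup, htop,
      map_top_of_surjective _ (QuotientGroup.mk'_surjective M)]⟩
  let _ := IsCyclic.commGroup (α := G ⧸ M)
  exact hzM (by simpa using Abelianization.commutator_subset_ker (QuotientGroup.mk' M) hzc)

theorem isPGroup_two_of_sq_mem_zpowers {c : G} (hc2 : c ^ 2 = 1)
    (hsq : ∀ g : G, g ^ 2 ∈ zpowers c) : IsPGroup 2 G := fun g => ⟨2, by
  obtain ⟨k, hk⟩ := mem_zpowers_iff.1 (hsq g)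
  rw [show 2 ^ 2 = 2 * 2 by norm_num, pow_mul, ← hk]
  rcases zpow_eq_one_or_self_of_sq_eq_one hc2 k with h | h <;> simp [h, hc2]⟩

theorem quotient_zpowers_sq_eq_one {S : Set G} (hgen : closure S = ⊤)
    {c : G} [(zpowers c).Normal] (h1 : ∀ s ∈ S, s ^ 2 = c)
    (h2 : ∀ s ∈ S, ∀ t ∈ S, s * t = t * s ∨ s * t * s⁻¹ = t⁻¹) (q : G ⧸ zpowers c) :
    q ^ 2 = 1 := by
  have hcomm : ∀ s ∈ S, ∀ t ∈ S, ⁅s, t⁆ ∈ zpowers c := by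
    intro s hs t ht
    rcases h2 s hs t ht with h | h
    · rw [commutatorElement_eq_one_iff_mul_comm.2 h]
      exact one_mem _
    · rw [commutatorElement_eq_inv_sq_of_conj_eq_inv h, h1 t ht]
      exact inv_mem (mem_zpowers c)
  refine forall_sq_eq_one_of_closure_eq_top (S := QuotientGroup.mk' _ '' S) ?_ ?_ ?_ q
  · rw [← MonoidHom.map_closure, hgen, map_top_of_surjective _ (QuotientGroup.mk'_surjective _)]
  · rintro _ ⟨s, hs, rfl⟩ _ ⟨t, ht, rfl⟩
    rw [← commutatorElement_eq_one_iff_mul_comm, ← map_commutatorElement, QuotientGroup.mk'_apply,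
      QuotientGroup.eq_one_iff]
    exact hcomm s hs t ht
  · rintro _ ⟨s, hs, rfl⟩
    rw [← map_pow, h1 s hs, QuotientGroup.mk'_apply, QuotientGroup.eq_one_iff]
    exact mem_zpowers c

end

/-- Let `G` be generated by a finite set `S`, with `c` central, `c ≠ 1`, `c² = 1`, such that
every `s ∈ S` squares to `c`, any two elements of `S` either commute or are "anti-conjugate",
and some two elements of `S` do not commute.  Then `G` is a finite 2-group with
`[G,G] = ⟨{g² : g ∈ G}⟩ = Φ(G) = ⟨c⟩`; in particular `G` is generalized extraspecial. -/
theorem statement_10 {G : Type*} [Group G] (S : Finset G)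
    (hgen : Subgroup.closure (S : Set G) = ⊤)
    (c : G) (hc : c ∈ Subgroup.center G) (hc1 : c ≠ 1) (hc2 : c ^ 2 = 1)
    (h1 : ∀ s ∈ S, s ^ 2 = c)
    (h2 : ∀ s ∈ S, ∀ t ∈ S, s * t = t * s ∨ s * t * s⁻¹ = t⁻¹)
    (h3 : ∃ s ∈ S, ∃ t ∈ S, s * t ≠ t * s) :
    Finite G ∧ IsPGroup 2 G ∧
    commutator G = Subgroup.closure {c} ∧
    Subgroup.closure {g : G | ∃ x : G, g = x ^ 2} = Subgroup.closure {c} ∧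
    frattini G = Subgroup.closure {c} ∧
    IsGeneralizedExtraspecial G := by
  obtain ⟨s₀, hs₀, t₀, ht₀, hst₀⟩ := h3
  rw [← zpowers_eq_closure]
  have hcenter : zpowers c ≤ center G := zpowers_le.2 hc
  have := normal_of_le_center hcenter
  have hQ := quotient_zpowers_sq_eq_one hgen h1 h2
  have hsq (g : G) : g ^ 2 ∈ zpowers c := (QuotientGroup.eq_one_iff _).1 (hQ g)
  have hc_comm : c ∈ commutator G := by
    rw [← inv_mem_iff, ← h1 t₀ ht₀, ← commutatorElement_eq_inv_sq_of_conj_eq_inv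
      ((h2 s₀ hs₀ t₀ ht₀).resolve_left hst₀)]
    exact commutator_mem_commutator (mem_top s₀) (mem_top t₀)
  have hsq_closure : closure {g : G | ∃ x : G, g = x ^ 2} = zpowers c :=
    le_antisymm ((closure_le _).2 fun _ ⟨x, hx⟩ => hx ▸ hsq x)
      (zpowers_le.2 (subset_closure ⟨s₀, (h1 s₀ hs₀).symm⟩))
  have hcomm : commutator G = zpowers c :=
    le_antisymm (hsq_closure ▸ commutator_le_closure_sq) (zpowers_le.2 hc_comm)
  have hfrat : frattini G = zpowers c := by
    refine le_antisymm ?_ (zpowers_le.2 (mem_frattini_of_mem_center_of_mem_commutator hc hc_comm))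
    have := frattini_le_comap_frattini_of_surjective (QuotientGroup.mk'_surjective (zpowers c))
    rwa [frattini_eq_bot_of_forall_sq_eq_one hQ, MonoidHom.comap_bot,
      QuotientGroup.ker_mk'] at this
  have hcard : Nat.card (zpowers c) = 2 := by rw [Nat.card_zpowers, orderOf_eq_prime hc2 hc1]
  have : Group.FG G := Group.fg_iff.2 ⟨S, hgen, S.finite_toSet⟩
  have : Group.FG (G ⧸ zpowers c) := Group.fg_of_surjective (QuotientGroup.mk'_surjective _)
  have := finite_of_forall_sq_eq_one hQ
  have : Finite (zpowers c) := Nat.finite_of_card_ne_zero (by rw [hcard]; exact two_ne_zero)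
  have hfin : Finite G := Finite.of_subgroup_quotient (zpowers c)
  have hp := isPGroup_two_of_sq_mem_zpowers hc2 hsq
  exact ⟨hfin, hp, hcomm, hsq_closure, hfrat,
    hfin, hp, hfrat ▸ hcenter, hfrat.trans hcomm.symm, hfrat ▸ hcard⟩
end

section
/- For every n ≥ 1, the group E(n) is isomorphic to the group G_{0,n−1} presented by generators ε, x₁, …, x_{n−1} and relations ε² = 1, xᵢ² = ε for all i, xᵢxⱼ = ε xⱼxᵢ for all i ≠ j, and εxᵢ = xᵢε for all i. -/
open CliffordAlgebra

/-- The negative definite quadratic form `x ↦ −(x₁² + ⋯ + xₙ²)` on `ℝⁿ`. -/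
noncomputable def negQ (n : ℕ) : QuadraticForm ℝ (Fin n → ℝ) :=
  QuadraticMap.weightedSumSquares ℝ (fun _ : Fin n => (-1 : ℝ))

/-- The standard generators `e₁, …, eₙ` of the Clifford algebra `Cl(0,n)`. -/
noncomputable def cliffGen (n : ℕ) (i : Fin n) : CliffordAlgebra (negQ n) :=
  CliffordAlgebra.ι (negQ n) (Pi.single i 1)

/-- `E(n)`: the subgroup of the units of `Cl(0,n)` generated by `−1` together with the
products `eᵢeⱼ` for `i ≠ j` (equivalently, signed products of evenly many `eᵢ`'s). -/
noncomputable def En (n : ℕ) : Subgroup (CliffordAlgebra (negQ n))ˣ :=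
  Subgroup.closure
    {u : (CliffordAlgebra (negQ n))ˣ |
      (↑u : CliffordAlgebra (negQ n)) = -1 ∨
      ∃ i j : Fin n, i ≠ j ∧ (↑u : CliffordAlgebra (negQ n)) = cliffGen n i * cliffGen n j}

/-- The relators of the presentation `G_{0,n−1}`: generators `ε` (encoded as `none`) and
`x₁, …, x_{n−1}` (encoded as `some i`), with relations `ε² = 1`, `xᵢ² = ε`,
`xᵢxⱼ = ε xⱼxᵢ` for `i ≠ j`, and `ε xᵢ = xᵢ ε`. -/
def GRels (n : ℕ) : Set (FreeGroup (Option (Fin (n - 1)))) :=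
  {w | w = FreeGroup.of none ^ 2 ∨
    (∃ i, w = FreeGroup.of (some i) ^ 2 * (FreeGroup.of none)⁻¹) ∨
    (∃ i j, i ≠ j ∧
      w = FreeGroup.of (some i) * FreeGroup.of (some j) *
        (FreeGroup.of none * FreeGroup.of (some j) * FreeGroup.of (some i))⁻¹) ∨
    (∃ i, w = FreeGroup.of none * FreeGroup.of (some i) *
        (FreeGroup.of (some i) * FreeGroup.of none)⁻¹)}

/-!
Index from `0`, as `Fin` does, and send `ε ↦ -1` and `xᵢ ↦ e₀eᵢ₊₁`. These units satisfy the
relations, and together they generate `E(n)` because `eᵢeⱼ = (e₀eᵢ)(e₀eⱼ)` and `eᵢe₀ = -e₀eᵢ`.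

For injectivity: `ε` is central with `ε² = 1`, and `G / ⟨ε⟩` is an elementary abelian 2-group
generated by the images of the `xᵢ`. So the characters `χₖ` with `χₖ(xᵢ) = -1` exactly when
`i = k` determine an element of `G` up to a power of `ε`. The image of `g` determines each
`χₖ(g)`, because conjugating it by `eₖ₊₁` multiplies it by `χₖ(g)`. A kernel element is
therefore a power of `ε` that maps to `1`. That makes it an even power of `ε`, so it is trivial.
-/

section Clifford

instance {M : Type*} [AddCommGroup M] [Module ℝ M] (Q : QuadraticForm ℝ M) :
    CharZero (CliffordAlgebra Q) :=
  charZero_of_injective_algebraMap (algebraMap ℝ _).injective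

variable {n : ℕ}

theorem negQ_single (i : Fin n) : negQ n (Pi.single i 1) = -1 := by
  simp [negQ, Pi.single_apply]

theorem negQ_isOrtho_single {i j : Fin n} (h : i ≠ j) :
    (negQ n).IsOrtho (Pi.single i 1) (Pi.single j 1) := by
  simp only [QuadraticMap.IsOrtho, negQ, QuadraticMap.weightedSumSquares_apply]
  rw [← Finset.sum_add_distrib]
  refine Finset.sum_congr rfl fun k _ => ?_
  rcases eq_or_ne k i with rfl | hi <;> rcases eq_or_ne k j with rfl | hj <;>
    simp_all

theorem cliffGen_mul_self (i : Fin n) : cliffGen n i * cliffGen n i = -1 := by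
  rw [cliffGen, ι_sq_scalar, negQ_single, map_neg, map_one]

theorem cliffGen_mul_cliffGen_of_ne {i j : Fin n} (h : i ≠ j) :
    cliffGen n i * cliffGen n j = -(cliffGen n j * cliffGen n i) :=
  ι_mul_ι_comm_of_isOrtho (negQ_isOrtho_single h)

noncomputable def cliffGenUnit (i : Fin n) : (CliffordAlgebra (negQ n))ˣ where
  val := cliffGen n i
  inv := -cliffGen n i
  val_inv := by rw [mul_neg, cliffGen_mul_self, neg_neg]
  inv_val := by rw [neg_mul, cliffGen_mul_self, neg_neg]

@[simp]
theorem val_cliffGenUnit (i : Fin n) :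
    (cliffGenUnit i : CliffordAlgebra (negQ n)) = cliffGen n i :=
  rfl

theorem cliffGenUnit_mul_self (i : Fin n) : cliffGenUnit i * cliffGenUnit i = -1 :=
  Units.ext (by simp [cliffGen_mul_self])

theorem cliffGenUnit_mul_cliffGenUnit_of_ne {i j : Fin n} (h : i ≠ j) :
    cliffGenUnit i * cliffGenUnit j = -(cliffGenUnit j * cliffGenUnit i) :=
  Units.ext (by simp [cliffGen_mul_cliffGen_of_ne h])

theorem cliffGenUnit_conj (c a : Fin n) :
    cliffGenUnit c * cliffGenUnit a * (cliffGenUnit c)⁻¹ =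
      if a = c then cliffGenUnit a else -cliffGenUnit a := by
  split_ifs with h
  · rw [h, mul_inv_cancel_right]
  · rw [cliffGenUnit_mul_cliffGenUnit_of_ne (Ne.symm h), neg_mul, mul_inv_cancel_right]

theorem cliffGenUnit_mul_sq {i j : Fin n} (h : i ≠ j) :
    (cliffGenUnit i * cliffGenUnit j) * (cliffGenUnit i * cliffGenUnit j) = -1 := by
  rw [mul_assoc, ← mul_assoc (cliffGenUnit j), cliffGenUnit_mul_cliffGenUnit_of_ne h.symm]
  simp [← mul_assoc, cliffGenUnit_mul_self]

theorem cliffGenUnit_mul_mul_cliffGenUnit_mul {z i j : Fin n} (hi : z ≠ i) :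
    (cliffGenUnit z * cliffGenUnit i) * (cliffGenUnit z * cliffGenUnit j) =
      cliffGenUnit i * cliffGenUnit j := by
  rw [mul_assoc, ← mul_assoc (cliffGenUnit i), cliffGenUnit_mul_cliffGenUnit_of_ne hi.symm]
  simp [← mul_assoc, cliffGenUnit_mul_self]

end Clifford

theorem zpow_eq_one_of_mul_self_eq_one {G : Type*} [Group G] {x : G} (hx : x * x = 1) {a : ℤ}
    (ha : Even a) : x ^ a = 1 := by
  obtain ⟨b, rfl⟩ := ha
  rw [← two_mul, zpow_mul, zpow_two, hx, one_zpow]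

theorem even_of_neg_one_zpow_eq_one {M : Type*} [Monoid M] [HasDistribNeg M]
    (hM : (-1 : Mˣ) ≠ 1) {a : ℤ} (h : (-1 : Mˣ) ^ a = 1) : Even a := by
  by_contra hodd
  exact hM ((Int.not_even_iff_odd.mp hodd).neg_one_zpow.symm.trans h)

theorem Subgroup.normal_of_le_center {G : Type*} [Group G] {N : Subgroup G}
    (h : N ≤ Subgroup.center G) : N.Normal :=
  ⟨fun x hx g => by rwa [(Subgroup.mem_center_iff.mp (h hx) g), mul_inv_cancel_right]⟩

theorem PresentedGroup.commute_map_of_commute_of {α H : Type*} [Group H]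
    {rels : Set (FreeGroup α)}
    (f : PresentedGroup rels →* H) (hf : ∀ a b, Commute (f (.of a)) (f (.of b)))
    (x y : PresentedGroup rels) : Commute (f x) (f y) := by
  let centralizerOf (w : H) := (Subgroup.centralizer {w}).comap f
  have commute_of_mem_centralizer : ∀ {z : PresentedGroup rels} {w : H},
      z ∈ centralizerOf w → Commute (f z) w := fun hz =>
    Subgroup.mem_centralizer_singleton_iff.mp hz
  have hgen : ∀ a y, Commute (f (.of a)) (f y) := fun a y =>
    (commute_of_mem_centralizer <| PresentedGroup.generated_by rels (centralizerOf (f (.of a)))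
      (fun b => Subgroup.mem_centralizer_singleton_iff.mpr (hf b a).eq) y).symm
  exact commute_of_mem_centralizer <| PresentedGroup.generated_by rels (centralizerOf (f y))
    (fun a => Subgroup.mem_centralizer_singleton_iff.mpr (hgen a y).eq) x

namespace GRels

variable {n : ℕ}

theorem lift_eq_one {H : Type*} [Group H] {f : Option (Fin (n - 1)) → H}
    (h_eps : f none * f none = 1)
    (h_sq : ∀ i, f (some i) * f (some i) = f none)
    (h_swap : ∀ i j, i ≠ j → f (some i) * f (some j) = f none * f (some j) * f (some i))
    (h_central : ∀ i, f none * f (some i) = f (some i) * f none) :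
    ∀ r ∈ GRels n, FreeGroup.lift f r = 1 := by
  rintro r (rfl | ⟨i, rfl⟩ | ⟨i, j, hij, rfl⟩ | ⟨i, rfl⟩) <;>
    simp only [map_mul, map_inv, FreeGroup.lift_apply_of, mul_inv_eq_one, sq]
  exacts [h_eps, h_sq i, h_swap i j hij, h_central i]

def eps (n : ℕ) : PresentedGroup (GRels n) := .of none

def gen (n : ℕ) (i : Fin (n - 1)) : PresentedGroup (GRels n) := .of (some i)

theorem eps_mul_self : eps n * eps n = 1 := by
  have hrel := PresentedGroup.one_of_mem (rels := GRels n) (Or.inl rfl)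
  simp only [sq] at hrel
  exact hrel

theorem gen_mul_self (i : Fin (n - 1)) : gen n i * gen n i = eps n := by
  have hrel := PresentedGroup.one_of_mem (rels := GRels n) (Or.inr (Or.inl ⟨i, rfl⟩))
  simp only [map_mul, map_inv, mul_inv_eq_one, sq] at hrel
  exact hrel

theorem gen_mul_gen_of_ne {i j : Fin (n - 1)} (h : i ≠ j) :
    gen n i * gen n j = eps n * gen n j * gen n i := by
  have hrel :=
    PresentedGroup.one_of_mem (rels := GRels n) (Or.inr (Or.inr (Or.inl ⟨i, j, h, rfl⟩)))
  simp only [map_mul, map_inv, mul_inv_eq_one] at hrel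
  exact hrel

theorem eps_mul_gen (i : Fin (n - 1)) : eps n * gen n i = gen n i * eps n := by
  have hrel := PresentedGroup.one_of_mem (rels := GRels n) (Or.inr (Or.inr (Or.inr ⟨i, rfl⟩)))
  simp only [map_mul, map_inv, mul_inv_eq_one] at hrel
  exact hrel

theorem eps_mem_center : eps n ∈ Subgroup.center (PresentedGroup (GRels n)) := by
  rw [Subgroup.mem_center_iff]
  refine fun g => PresentedGroup.generated_by _ (Subgroup.centralizer {eps n})
    (fun a => Subgroup.mem_centralizer_singleton_iff.mpr ?_) g |>
      Subgroup.mem_centralizer_singleton_iff.mp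
  rcases a with _ | i
  · rfl
  · exact (eps_mul_gen i).symm

instance : (Subgroup.zpowers (eps n)).Normal :=
  Subgroup.normal_of_le_center <| Subgroup.zpowers_le.mpr eps_mem_center

theorem mk_eps :
    (QuotientGroup.mk (eps n) : PresentedGroup (GRels n) ⧸ Subgroup.zpowers (eps n)) = 1 :=
  (QuotientGroup.eq_one_iff _).mpr (Subgroup.mem_zpowers _)

instance : CommGroup (PresentedGroup (GRels n) ⧸ Subgroup.zpowers (eps n)) where
  mul_comm := by
    rintro ⟨a⟩ ⟨b⟩
    refine PresentedGroup.commute_map_of_commute_of (QuotientGroup.mk' _) ?_ a b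
    have hε : QuotientGroup.mk' (Subgroup.zpowers (eps n)) (.of none) = 1 := mk_eps
    rintro (_ | i) (_ | j)
    · exact Commute.refl _
    · exact hε ▸ Commute.one_left _
    · exact hε ▸ Commute.one_right _
    · obtain rfl | hij := eq_or_ne i j
      · exact Commute.refl _
      · change QuotientGroup.mk' _ (gen n i) * QuotientGroup.mk' _ (gen n j) =
          QuotientGroup.mk' _ (gen n j) * QuotientGroup.mk' _ (gen n i)
        rw [← map_mul, gen_mul_gen_of_ne hij, map_mul, map_mul, QuotientGroup.mk'_apply, mk_eps,
          one_mul]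

def signChar (n : ℕ) (k : Fin (n - 1)) : PresentedGroup (GRels n) →* ℤˣ :=
  PresentedGroup.toGroup (f := fun
    | none => 1
    | some i => if i = k then -1 else 1)
    (lift_eq_one (by simp) (fun _ => Int.units_mul_self _) (fun _ _ _ => by simp [mul_comm])
      (fun _ => by simp))

@[simp]
theorem signChar_eps (k : Fin (n - 1)) : signChar n k (eps n) = 1 :=
  PresentedGroup.toGroup.of _

@[simp]
theorem signChar_gen (k i : Fin (n - 1)) : signChar n k (gen n i) = if i = k then -1 else 1 :=
  PresentedGroup.toGroup.of _

theorem mem_zpowers_eps_of_forall_signChar_eq_one {g : PresentedGroup (GRels n)}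
    (h : ∀ k, signChar n k g = 1) : g ∈ Subgroup.zpowers (eps n) := by
  let N := Subgroup.zpowers (eps n)
  have hgen : (g : PresentedGroup (GRels n) ⧸ N) ∈
      Subgroup.closure (Set.range fun i => ((gen n i : PresentedGroup (GRels n)) : _ ⧸ N)) := by
    refine PresentedGroup.generated_by _ ((Subgroup.closure _).comap (QuotientGroup.mk' N))
      (fun a => ?_) g
    rcases a with _ | i
    · change QuotientGroup.mk (eps n) ∈ Subgroup.closure _
      exact mk_eps (n := n) ▸ Subgroup.one_mem _
    · exact Subgroup.subset_closure ⟨i, rfl⟩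
  obtain ⟨a, ha⟩ := Subgroup.exists_of_mem_closure_range _ _ hgen
  have hsign (k) : signChar n k g = (-1) ^ a k := by
    let χ := QuotientGroup.lift N (signChar n k) (Subgroup.zpowers_le.mpr (signChar_eps k))
    calc signChar n k g = χ g := (QuotientGroup.lift_mk ..).symm
      _ = ∏ i, signChar n k (gen n i) ^ a i := by simp [χ, ha, map_prod, map_zpow]
      _ = (-1) ^ a k := by simp
  rw [← QuotientGroup.eq_one_iff, ha]
  refine Finset.prod_eq_one fun k _ => zpow_eq_one_of_mul_self_eq_one ?_
    (even_of_neg_one_zpow_eq_one (by decide) ((hsign k).symm.trans (h k)))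
  rw [← QuotientGroup.mk_mul, gen_mul_self, mk_eps]

end GRels

section CliffordRepresentation

open GRels

variable {m : ℕ}

noncomputable def cliffRep (m : ℕ) :
    PresentedGroup (GRels (m + 1)) →* (CliffordAlgebra (negQ (m + 1)))ˣ :=
  PresentedGroup.toGroup (f := fun
    | none => -1
    | some i => cliffGenUnit 0 * cliffGenUnit i.succ)
    (lift_eq_one (by simp) (fun i => cliffGenUnit_mul_sq (Fin.succ_ne_zero i).symm)
      (fun i j hij => by
        simp only [neg_mul, one_mul]
        rw [cliffGenUnit_mul_mul_cliffGenUnit_mul (Fin.succ_ne_zero i).symm,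
          cliffGenUnit_mul_mul_cliffGenUnit_mul (Fin.succ_ne_zero j).symm,
          cliffGenUnit_mul_cliffGenUnit_of_ne (Fin.succ_injective _ |>.ne hij)])
      (fun _ => by simp))

@[simp]
theorem cliffRep_eps : cliffRep m (eps (m + 1)) = -1 :=
  PresentedGroup.toGroup.of _

@[simp]
theorem cliffRep_gen (i : Fin m) :
    cliffRep m (gen (m + 1) i) = cliffGenUnit 0 * cliffGenUnit i.succ :=
  PresentedGroup.toGroup.of _

theorem cliffGenUnit_conj_cliffRep (k : Fin m) (g : PresentedGroup (GRels (m + 1))) :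
    cliffGenUnit k.succ * cliffRep m g * (cliffGenUnit k.succ)⁻¹ =
      Units.map (Int.castRingHom (CliffordAlgebra (negQ (m + 1)))).toMonoidHom
        (signChar (m + 1) k g) * cliffRep m g := by
  set ι := Units.map (Int.castRingHom (CliffordAlgebra (negQ (m + 1)))).toMonoidHom
  have hι : ∀ s v, Commute (ι s) v := fun s v => Units.ext (Int.cast_commute _ _).eq
  have hext := PresentedGroup.ext
    (φ := (MulAut.conj (cliffGenUnit k.succ)).toMonoidHom.comp (cliffRep m))
    (ψ := (ι.noncommCoprod (MonoidHom.id _) hι).comp ((signChar (m + 1) k).prod (cliffRep m))) ?_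
  · exact DFunLike.congr_fun hext g
  rintro (_ | i)
  · simp [cliffRep, signChar]
  · simp only [cliffRep, signChar, MonoidHom.comp_apply, PresentedGroup.toGroup.of, map_mul,
      MulEquiv.coe_toMonoidHom, MonoidHom.prod_apply, MonoidHom.noncommCoprod_apply,
      MonoidHom.id_apply]
    rw [MulAut.conj_apply, MulAut.conj_apply, cliffGenUnit_conj, cliffGenUnit_conj,
      if_neg (Fin.succ_ne_zero k).symm]
    by_cases h : i = k <;> ext <;> simp [ι, h]

theorem cliffRep_injective : Function.Injective (cliffRep m) := by
  rw [injective_iff_map_eq_one]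
  intro g hg
  have hsign (k : Fin m) : signChar (m + 1) k g = 1 := by
    have h := cliffGenUnit_conj_cliffRep k g
    rw [hg, mul_one, mul_inv_cancel, mul_one] at h
    rcases Int.units_eq_one_or (signChar (m + 1) k g) with h1 | hneg
    · exact h1
    · rw [hneg] at h
      exact absurd (Units.ext (by simpa using (congrArg Units.val h).symm)) (neg_units_ne_self 1)
  obtain ⟨a, rfl⟩ := Subgroup.mem_zpowers_iff.mp
    (mem_zpowers_eps_of_forall_signChar_eq_one (n := m + 1) hsign)
  rw [map_zpow, cliffRep_eps] at hg
  exact zpow_eq_one_of_mul_self_eq_one eps_mul_self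
    (even_of_neg_one_zpow_eq_one (neg_units_ne_self 1) hg)

theorem cliffGenUnit_mul_mem_range {i j : Fin (m + 1)} (h : i ≠ j) :
    cliffGenUnit i * cliffGenUnit j ∈ (cliffRep m).range := by
  cases i using Fin.cases with
  | zero =>
    cases j using Fin.cases with
    | zero => exact absurd rfl h
    | succ j => exact ⟨gen (m + 1) j, cliffRep_gen j⟩
  | succ i =>
    cases j using Fin.cases with
    | zero =>
      refine ⟨eps _ * gen (m + 1) i, ?_⟩
      rw [map_mul, cliffRep_eps, cliffRep_gen, cliffGenUnit_mul_cliffGenUnit_of_ne h, neg_one_mul]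
    | succ j =>
      refine ⟨gen (m + 1) i * gen (m + 1) j, ?_⟩
      rw [map_mul, cliffRep_gen, cliffRep_gen,
        cliffGenUnit_mul_mul_cliffGenUnit_mul (Fin.succ_ne_zero i).symm]

theorem range_cliffRep : (cliffRep m).range = En (m + 1) := by
  apply le_antisymm
  · rw [MonoidHom.range_eq_map, ← PresentedGroup.closure_range_of, MonoidHom.map_closure,
      Subgroup.closure_le]
    rintro _ ⟨_, ⟨_ | i, rfl⟩, rfl⟩
    · exact Subgroup.subset_closure (Or.inl (by simp [cliffRep]))
    · exact Subgroup.subset_closure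
        (Or.inr ⟨0, i.succ, (Fin.succ_ne_zero i).symm, by simp [cliffRep]⟩)
  · refine Subgroup.closure_le _ |>.mpr ?_
    rintro u (hu | ⟨i, j, hij, hu⟩)
    · exact ⟨eps _, by rw [cliffRep_eps]; exact Units.ext (by rw [hu]; simp)⟩
    · rw [show u = cliffGenUnit i * cliffGenUnit j from Units.ext (by simpa using hu)]
      exact cliffGenUnit_mul_mem_range hij

end CliffordRepresentation

/-- For every `n ≥ 1`, the group `E(n)` is isomorphic to the presented group `G_{0,n−1}`. -/
theorem statement_17 (n : ℕ) (hn : 1 ≤ n) :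
    Nonempty (PresentedGroup (GRels n) ≃* En n) := by
  obtain ⟨m, rfl⟩ := Nat.exists_eq_add_of_le' hn
  exact ⟨(MonoidHom.ofInjective cliffRep_injective).trans
    (MulEquiv.subgroupCongr range_cliffRep)⟩
end
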